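/- arXiv:1408.5354 — 2 statements merged into one kernel-verified Lean document; each statement's English description precedes it below -/
import Mathlib

section
/- Let F : ℝⁿ ⇉ ℝⁿ have nonempty compact convex values and define H(x,p) = sup_{v ∈ F(x)} ⟨v,p⟩. Fix r > 0 and c ≥ 0. Then H(·,p) is semiconvex on B(0,r) with constant c·|p| for all p, i.e. 2H(x,p) ≤ H(x+z,p) + H(x−z,p) + c|z|²|p| whenever x±z ∈ B(0,r), if and only if F satisfies the mid-point property 2F(x) ⊆ F(x+z) + F(x−z) + c|z|²·B for all x, z with x±z ∈ B(0,r), where B is the closed unit ball. -/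
open RealInnerProductSpace Pointwise

/-- The support-function Hamiltonian of the set-valued map `F`. -/
noncomputable def ham {n : ℕ} (F : EuclideanSpace ℝ (Fin n) → Set (EuclideanSpace ℝ (Fin n)))
    (x p : EuclideanSpace ℝ (Fin n)) : ℝ :=
  sSup ((fun v => ⟪v, p⟫) '' F x)

/-!
Both conditions compare support functions `h_S(p) = sup_{v ∈ S} ⟪v, p⟫`, and `H(x, ·)` is the
support function of `F x`. Support functions are additive under Minkowski sums, positively
homogeneous, and `h_B = ‖·‖` for the unit ball, so the Hamiltonian inequality at `(x, z)` says
exactly that `h_{2 F x} ≤ h_{F(x+z) + F(x-z) + c|z|² B}`. For nonempty compact convex sets this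
pointwise inequality is equivalent to inclusion, by Hahn–Banach separation.
-/

open Bornology Metric

section SupportFunction

variable {E : Type*} [NormedAddCommGroup E] [InnerProductSpace ℝ E] {S T : Set E} {p : E}

noncomputable def supportFunction (S : Set E) (p : E) : ℝ :=
  sSup ((fun v => ⟪v, p⟫) '' S)

lemma bddAbove_image_inner (hS : IsBounded S) (p : E) : BddAbove ((fun v => ⟪v, p⟫) '' S) := by
  obtain ⟨R, hR⟩ := hS.exists_norm_le
  refine ⟨R * ‖p‖, ?_⟩
  rintro - ⟨v, hv, rfl⟩
  exact (real_inner_le_norm v p).trans (by gcongr; exact hR v hv)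

lemma inner_le_supportFunction (hS : IsBounded S) {v : E} (hv : v ∈ S) :
    ⟪v, p⟫ ≤ supportFunction S p :=
  le_csSup (bddAbove_image_inner hS p) (Set.mem_image_of_mem _ hv)

lemma supportFunction_le (hS₀ : S.Nonempty) {a : ℝ} (h : ∀ v ∈ S, ⟪v, p⟫ ≤ a) :
    supportFunction S p ≤ a :=
  csSup_le (hS₀.image _) (Set.forall_mem_image.2 h)

lemma supportFunction_mono (hS : IsBounded S) (hT₀ : T.Nonempty) (hTS : T ⊆ S) :
    supportFunction T p ≤ supportFunction S p :=
  supportFunction_le hT₀ fun _ hv => inner_le_supportFunction hS (hTS hv)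

lemma supportFunction_add (hS : IsBounded S) (hS₀ : S.Nonempty) (hT : IsBounded T)
    (hT₀ : T.Nonempty) : supportFunction (S + T) p = supportFunction S p + supportFunction T p :=
  (congrArg sSup (Set.image_add ((innerₗ E).flip p))).trans <|
    csSup_add (hS₀.image _) (bddAbove_image_inner hS p) (hT₀.image _) (bddAbove_image_inner hT p)

lemma supportFunction_smul {t : ℝ} (ht : 0 ≤ t) (S : Set E) (p : E) :
    supportFunction (t • S) p = t * supportFunction S p :=
  (congrArg sSup (image_smul_set ((innerₗ E).flip p) t S)).trans (Real.sSup_smul_of_nonneg ht _)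

lemma supportFunction_closedBall_zero_one (p : E) :
    supportFunction (closedBall (0 : E) 1) p = ‖p‖ := by
  refine le_antisymm (supportFunction_le (nonempty_closedBall.2 zero_le_one) fun v hv => ?_) ?_
  · exact (real_inner_le_norm v p).trans
      (mul_le_of_le_one_left (norm_nonneg p) (mem_closedBall_zero_iff.1 hv))
  · have hunit : ‖p‖⁻¹ • p ∈ closedBall (0 : E) 1 := by
      rw [mem_closedBall_zero_iff, norm_smul, norm_inv, norm_norm]
      exact inv_mul_le_one_of_le₀ le_rfl (norm_nonneg p)
    calc ‖p‖ = ⟪‖p‖⁻¹ • p, p⟫ := by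
          rw [real_inner_smul_left, real_inner_self_eq_norm_sq]
          rcases eq_or_ne ‖p‖ 0 with h | h
          · simp [h]
          · field_simp
      _ ≤ supportFunction (closedBall 0 1) p := inner_le_supportFunction isBounded_closedBall hunit

lemma subset_of_forall_supportFunction_le [CompleteSpace E] (hT : IsBounded T) (hS : IsClosed S)
    (hSc : Convex ℝ S) (hS₀ : S.Nonempty) (h : ∀ p, supportFunction T p ≤ supportFunction S p) :
    T ⊆ S := by
  intro v hv
  by_contra hvS
  obtain ⟨f, u, hfv, hfS⟩ := geometric_hahn_banach_point_closed hSc hS hvS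
  set q := -(InnerProductSpace.toDual ℝ E).symm f
  have hq : ∀ w, ⟪w, q⟫ = -f w := fun w => by
    rw [inner_neg_right, real_inner_comm, InnerProductSpace.toDual_symm_apply]
  have hSq : supportFunction S q ≤ -u :=
    supportFunction_le hS₀ fun w hw => by rw [hq]; linarith [hfS w hw]
  have hTq : -f v ≤ supportFunction T q := hq v ▸ inner_le_supportFunction hT hv
  linarith [h q]

lemma subset_iff_forall_supportFunction_le [CompleteSpace E] (hT : IsBounded T)
    (hT₀ : T.Nonempty) (hSb : IsBounded S) (hS : IsClosed S) (hSc : Convex ℝ S)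
    (hS₀ : S.Nonempty) : T ⊆ S ↔ ∀ p, supportFunction T p ≤ supportFunction S p :=
  ⟨fun hTS _ => supportFunction_mono hSb hT₀ hTS,
    subset_of_forall_supportFunction_le hT hS hSc hS₀⟩

end SupportFunction

lemma ham_eq_supportFunction {n : ℕ}
    (F : EuclideanSpace ℝ (Fin n) → Set (EuclideanSpace ℝ (Fin n))) (x p : EuclideanSpace ℝ (Fin n)) :
    ham F x p = supportFunction (F x) p :=
  rfl

theorem semiconvexity_iff_midpoint_property_general {n : ℕ}
    (F : EuclideanSpace ℝ (Fin n) → Set (EuclideanSpace ℝ (Fin n)))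
    (hF : ∀ x, (F x).Nonempty ∧ IsCompact (F x) ∧ Convex ℝ (F x))
    (r : ℝ) (c : ℝ) (hc : 0 ≤ c) :
    (∀ (x z p : EuclideanSpace ℝ (Fin n)), ‖x + z‖ ≤ r → ‖x - z‖ ≤ r →
        2 * ham F x p ≤ ham F (x + z) p + ham F (x - z) p + c * ‖z‖ ^ 2 * ‖p‖) ↔
      (∀ x z : EuclideanSpace ℝ (Fin n), ‖x + z‖ ≤ r → ‖x - z‖ ≤ r →
        (2 : ℝ) • F x ⊆ F (x + z) + F (x - z) +
          (c * ‖z‖ ^ 2) • Metric.closedBall (0 : EuclideanSpace ℝ (Fin n)) 1) := by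
  have key : ∀ x z, (2 : ℝ) • F x ⊆ F (x + z) + F (x - z) + (c * ‖z‖ ^ 2) • closedBall 0 1 ↔
      ∀ p, 2 * ham F x p ≤ ham F (x + z) p + ham F (x - z) p + c * ‖z‖ ^ 2 * ‖p‖ := by
    intro x z
    obtain ⟨hx₀, hx, -⟩ := hF x
    obtain ⟨h₁₀, h₁, h₁c⟩ := hF (x + z)
    obtain ⟨h₂₀, h₂, h₂c⟩ := hF (x - z)
    have hball := isCompact_closedBall (0 : EuclideanSpace ℝ (Fin n)) 1
    have hball₀ := (nonempty_closedBall (x := (0 : EuclideanSpace ℝ (Fin n)))).2 zero_le_one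
    have hsum := (h₁.add h₂).add (hball.smul (c * ‖z‖ ^ 2))
    rw [subset_iff_forall_supportFunction_le (hx.smul (2 : ℝ)).isBounded hx₀.smul_set
      hsum.isBounded hsum.isClosed ((h₁c.add h₂c).add ((convex_closedBall 0 1).smul _))
      ((h₁₀.add h₂₀).add hball₀.smul_set)]
    refine forall_congr' fun p => ?_
    rw [ham_eq_supportFunction, ham_eq_supportFunction, ham_eq_supportFunction,
      supportFunction_add (h₁.add h₂).isBounded (h₁₀.add h₂₀) (hball.smul _).isBounded
      hball₀.smul_set, supportFunction_add h₁.isBounded h₁₀ h₂.isBounded h₂₀,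
      supportFunction_smul zero_le_two, supportFunction_smul (by positivity),
      supportFunction_closedBall_zero_one]
  simp only [key]
  exact ⟨fun h x z hp hm p => h x z p hp hm, fun h x z p hp hm => h x z hp hm p⟩

theorem semiconvexity_iff_midpoint_property {n : ℕ}
    (F : EuclideanSpace ℝ (Fin n) → Set (EuclideanSpace ℝ (Fin n)))
    (hF : ∀ x, (F x).Nonempty ∧ IsCompact (F x) ∧ Convex ℝ (F x))
    (r : ℝ) (hr : 0 < r) (c : ℝ) (hc : 0 ≤ c) :
    (∀ (x z p : EuclideanSpace ℝ (Fin n)), ‖x + z‖ ≤ r → ‖x - z‖ ≤ r →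
        2 * ham F x p ≤ ham F (x + z) p + ham F (x - z) p + c * ‖z‖ ^ 2 * ‖p‖) ↔
      (∀ x z : EuclideanSpace ℝ (Fin n), ‖x + z‖ ≤ r → ‖x - z‖ ≤ r →
        (2 : ℝ) • F x ⊆ F (x + z) + F (x - z) +
          (c * ‖z‖ ^ 2) • Metric.closedBall (0 : EuclideanSpace ℝ (Fin n)) 1) :=
  semiconvexity_iff_midpoint_property_general F hF r c hc
end

section
/- Let A : [t₀,T] → M(n) and C, D : [t₀,T] → S(n) be continuous, with C(t) ≥ 0 (positive semidefinite) for all t. Let R : (t_c,T] → S(n) be a solution of Ṙ + A(t)*R + R A(t) + R C(t) R + D(t) = 0 with R(T) = R_T, and let Q : [t₀,T] → S(n) be the solution of the linear equation Q̇ + A(t)*Q + Q A(t) + D(t) = 0 with Q(T) = R_T. Then Q(t) ≤ R(t) in the sense of quadratic forms for all t ∈ (t_c,T]. -/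
/-!
`Δ = R - Q` solves the Lyapunov equation `Δ' = -AᵀΔ - ΔA - RCR` with `Δ(T) = 0`. Along any
solution of `y' = A y` the quadratic form `⟪y, Δ y⟫` has derivative `-⟪Ry, C Ry⟫ ≤ 0`, so it can
only grow backwards in time, from its value `0` at `T`. Picard–Lindelöf provides such solutions
through an arbitrary point only on intervals of a uniform length `h` (controlled by `sup ‖A‖`), so
nonnegativity of `Δ` is propagated backwards from `T` in steps of length `h`.
-/

open Matrix

attribute [local instance] Matrix.normedAddCommGroup Matrix.normedSpace

open Set NNReal

theorem exists_forall_mem_Icc_hasDerivWithinAt_clm_apply {E : Type*} [NormedAddCommGroup E]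
    [NormedSpace ℝ E] [CompleteSpace E] {B : ℝ → E →L[ℝ] E} {a b : ℝ} {K : ℝ≥0} (hab : a ≤ b)
    (hB : ContinuousOn B (Icc a b)) (hBK : ∀ t ∈ Icc a b, ‖B t‖₊ ≤ K)
    (hstep : K * (b - a) ≤ 1 / 2) (x : E) :
    ∃ y : ℝ → E, y a = x ∧ ∀ t ∈ Icc a b, HasDerivWithinAt y (B t (y t)) (Icc a b) t := by
  have hpl : IsPicardLindelof (fun t v ↦ B t v) (⟨a, left_mem_Icc.2 hab⟩ : Icc a b) x
      ‖x‖₊ 0 (2 * K * ‖x‖₊) K := by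
    -- On `closedBall x ‖x‖` the field is bounded by `2K‖x‖`, so in time `b - a ≤ 1 / (2K)` a
    -- solution cannot leave that ball.
    refine ⟨fun t ht ↦ ((B t).lipschitz.weaken (hBK t ht)).lipschitzOnWith,
      fun v _ ↦ hB.clm_apply continuousOn_const, fun t ht v hv ↦ ?_, ?_⟩
    · have hv' : ‖v‖ ≤ 2 * ‖x‖ := by
        have := norm_le_norm_add_norm_sub' v x
        rw [Metric.mem_closedBall, dist_eq_norm, coe_nnnorm] at hv
        linarith
      calc ‖B t v‖ ≤ ‖B t‖ * ‖v‖ := (B t).le_opNorm v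
        _ ≤ K * (2 * ‖x‖) := by gcongr; exact hBK t ht
        _ = _ := by push_cast; ring
    · have hK : (K : ℝ) * (b - a) * (2 * ‖x‖) ≤ ‖x‖ := by nlinarith [norm_nonneg x]
      rw [max_eq_left (by simpa using hab)]
      push_cast
      linarith
  exact hpl.exists_eq_forall_mem_Icc_hasDerivWithinAt₀

theorem forall_mem_Ioc_of_forall_step {p : ℝ → Prop} {a b h : ℝ} (hh : 0 < h) (hb : p b)
    (hstep : ∀ t s, a < t → t ≤ s → s ≤ b → s ≤ t + h → p s → p t) :
    ∀ t ∈ Ioc a b, p t := by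
  suffices ∀ k : ℕ, ∀ t ∈ Ioc a b, b - t ≤ k * h → p t by
    intro t ht
    obtain ⟨k, hk⟩ := exists_nat_ge ((b - t) / h)
    exact this k t ht ((div_le_iff₀ hh).1 hk)
  intro k
  induction k with
  | zero =>
    intro t ht hbt
    obtain rfl : t = b := le_antisymm ht.2 (by simpa using hbt)
    exact hb
  | succ k ih =>
    intro t ht hbt
    refine hstep t (min b (t + h)) ht.1 (le_min ht.2 (by linarith)) (min_le_left _ _)
      (min_le_right _ _) (ih _ ⟨lt_min (by linarith [ht.1, ht.2]) (by linarith [ht.1]),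
        min_le_left _ _⟩ ?_)
    rcases min_cases b (t + h) with ⟨hmin, -⟩ | ⟨hmin, -⟩ <;> rw [hmin]
    · simpa using mul_nonneg k.cast_nonneg hh.le
    · push_cast at hbt; linarith

theorem HasDerivWithinAt.dotProduct_mulVec {ι : Type*} [Fintype ι] {M : ℝ → Matrix ι ι ℝ}
    {y : ℝ → ι → ℝ} {M' : Matrix ι ι ℝ} {y' : ι → ℝ} {s : Set ℝ} {t : ℝ}
    (hM : HasDerivWithinAt M M' s t) (hy : HasDerivWithinAt y y' s t) :
    HasDerivWithinAt (fun t ↦ y t ⬝ᵥ (M t *ᵥ y t))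
      (y' ⬝ᵥ (M t *ᵥ y t) + y t ⬝ᵥ (M' *ᵥ y t) + y t ⬝ᵥ (M t *ᵥ y')) s t := by
  have hMy := (mulVecBilin ℝ ℝ).toContinuousBilinearMap.hasDerivWithinAt_of_bilinear hM hy
  have := (dotProductBilin ℝ ℝ).toContinuousBilinearMap.hasDerivWithinAt_of_bilinear hy hMy
  simp only [LinearMap.toContinuousBilinearMap_apply, dotProductBilin_apply_apply,
    mulVecBilin_apply, dotProduct_add] at this
  exact this.congr_deriv (by ring)

section Lyapunov

variable {ι : Type*} [Fintype ι] {A S Δ : ℝ → Matrix ι ι ℝ} {a b : ℝ}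

theorem dotProduct_mulVec_le_of_lyapunov {y : ℝ → ι → ℝ} (hab : a ≤ b)
    (hy : ∀ t ∈ Icc a b, HasDerivWithinAt y (A t *ᵥ y t) (Icc a b) t)
    (hΔ : ∀ t ∈ Icc a b, HasDerivWithinAt Δ (-((A t)ᵀ * Δ t) - Δ t * A t - S t) (Icc a b) t)
    (hS : ∀ t ∈ Icc a b, (S t).PosSemidef) :
    y b ⬝ᵥ (Δ b *ᵥ y b) ≤ y a ⬝ᵥ (Δ a *ᵥ y a) := by
  have hg : ∀ t ∈ Icc a b, HasDerivWithinAt (fun t ↦ y t ⬝ᵥ (Δ t *ᵥ y t))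
      (-(y t ⬝ᵥ (S t *ᵥ y t))) (Icc a b) t := by
    intro t ht
    convert (hΔ t ht).dotProduct_mulVec (hy t ht) using 1
    simp only [sub_mulVec, neg_mulVec, ← mulVec_mulVec, dotProduct_sub, dotProduct_neg]
    rw [dotProduct_mulVec (y t) (A t)ᵀ, vecMul_transpose]
    ring
  refine antitoneOn_of_hasDerivWithinAt_nonpos (f' := fun t ↦ -(y t ⬝ᵥ (S t *ᵥ y t)))
    (convex_Icc a b) (fun t ht ↦ (hg t ht).continuousWithinAt) (fun t ht ↦ ?_) (fun t ht ↦ ?_)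
    (left_mem_Icc.2 hab) (right_mem_Icc.2 hab) hab
  · exact (hg t (interior_subset ht)).mono interior_subset
  · simpa [star_trivial] using (hS t (interior_subset ht)).dotProduct_mulVec_nonneg (y t)

theorem dotProduct_mulVec_nonneg_of_lyapunov (hA : ContinuousOn A (Icc a b))
    (hΔ : ∀ t ∈ Ioc a b, HasDerivAt Δ (-((A t)ᵀ * Δ t) - Δ t * A t - S t) t)
    (hS : ∀ t ∈ Ioc a b, (S t).PosSemidef) (hb : ∀ x, 0 ≤ x ⬝ᵥ (Δ b *ᵥ x)) :
    ∀ t ∈ Ioc a b, ∀ x, 0 ≤ x ⬝ᵥ (Δ t *ᵥ x) := by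
  have hB : ContinuousOn (fun t ↦ (mulVecBilin ℝ ℝ).toContinuousBilinearMap (A t)) (Icc a b) :=
    (ContinuousLinearMap.continuous _).comp_continuousOn hA
  obtain ⟨K, hK⟩ := (isCompact_Icc.image_of_continuousOn
    (continuous_nnnorm.comp_continuousOn hB)).bddAbove
  have hKh : (K : ℝ) * (1 / (2 * (K + 1))) ≤ 1 / 2 := by
    rw [mul_one_div, div_le_div_iff₀ (by positivity) two_pos]
    nlinarith [K.coe_nonneg]
  refine forall_mem_Ioc_of_forall_step (p := fun t ↦ ∀ x, 0 ≤ x ⬝ᵥ (Δ t *ᵥ x))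
    (h := 1 / (2 * (K + 1))) (by positivity) hb fun t s hat hts hsb hst hs x ↦ ?_
  have hsub : Icc t s ⊆ Icc a b := Icc_subset_Icc hat.le hsb
  obtain ⟨y, rfl, hy⟩ := exists_forall_mem_Icc_hasDerivWithinAt_clm_apply hts (hB.mono hsub)
    (fun τ hτ ↦ hK (mem_image_of_mem _ (hsub hτ)))
    (le_trans (by gcongr; linarith) hKh) x
  refine (hs (y s)).trans (dotProduct_mulVec_le_of_lyapunov (S := S) hts hy (fun τ hτ ↦ ?_)
    fun τ hτ ↦ ?_)
  · exact (hΔ τ ⟨hat.trans_le hτ.1, hτ.2.trans hsb⟩).hasDerivWithinAt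
  · exact hS τ ⟨hat.trans_le hτ.1, hτ.2.trans hsb⟩

end Lyapunov

theorem riccati_comparison_linear_general {n : ℕ} (t₀ tc T : ℝ) (ht₀ : t₀ ≤ tc)
    (A C D R Q : ℝ → Matrix (Fin n) (Fin n) ℝ)
    (hA : ContinuousOn A (Set.Icc t₀ T))
    (hCpos : ∀ t ∈ Set.Icc t₀ T, (C t).PosSemidef)
    (RT : Matrix (Fin n) (Fin n) ℝ)
    (hRsymm : ∀ t ∈ Set.Ioc tc T, (R t).IsSymm)
    (hR : ∀ t ∈ Set.Ioc tc T, HasDerivAt R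
      (-((A t)ᵀ * R t) - R t * A t - R t * C t * R t - D t) t)
    (hRfin : R T = RT)
    (hQsymm : ∀ t ∈ Set.Icc t₀ T, (Q t).IsSymm)
    (hQ : ∀ t ∈ Set.Icc t₀ T, HasDerivAt Q (-((A t)ᵀ * Q t) - Q t * A t - D t) t)
    (hQfin : Q T = RT) :
    ∀ t ∈ Set.Ioc tc T, (R t - Q t).PosSemidef := by
  have hIoc : Ioc tc T ⊆ Icc t₀ T := fun s hs ↦ ⟨ht₀.trans hs.1.le, hs.2⟩
  have hΔ : ∀ s ∈ Ioc tc T, HasDerivAt (fun s ↦ R s - Q s)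
      (-((A s)ᵀ * (R s - Q s)) - (R s - Q s) * A s - R s * C s * R s) s := fun s hs ↦
    ((hR s hs).sub (hQ s (hIoc hs))).congr_deriv (by noncomm_ring)
  have hRCR : ∀ s ∈ Ioc tc T, (R s * C s * R s).PosSemidef := fun s hs ↦ by
    simpa [(hRsymm s hs).eq] using (hCpos s (hIoc hs)).mul_mul_conjTranspose_same (R s)
  have hnonneg := dotProduct_mulVec_nonneg_of_lyapunov (hA.mono (Icc_subset_Icc_left ht₀)) hΔ
    hRCR (by simp [hRfin, hQfin])
  intro t ht
  refine .of_dotProduct_mulVec_nonneg ?_ fun x ↦ ?_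
  · exact isHermitian_iff_isSymm.2 ((hRsymm t ht).sub (hQsymm t (hIoc ht)))
  · simpa [star_trivial] using hnonneg t ht x

theorem riccati_comparison_linear {n : ℕ} (t₀ tc T : ℝ) (ht₀ : t₀ ≤ tc) (htc : tc < T)
    (A C D R Q : ℝ → Matrix (Fin n) (Fin n) ℝ)
    (hA : ContinuousOn A (Set.Icc t₀ T))
    (hC : ContinuousOn C (Set.Icc t₀ T)) (hCpos : ∀ t ∈ Set.Icc t₀ T, (C t).PosSemidef)
    (hD : ContinuousOn D (Set.Icc t₀ T)) (hDsymm : ∀ t ∈ Set.Icc t₀ T, (D t).IsSymm)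
    (RT : Matrix (Fin n) (Fin n) ℝ) (hRT : RT.IsSymm)
    (hRsymm : ∀ t ∈ Set.Ioc tc T, (R t).IsSymm)
    (hR : ∀ t ∈ Set.Ioc tc T, HasDerivAt R
      (-((A t)ᵀ * R t) - R t * A t - R t * C t * R t - D t) t)
    (hRfin : R T = RT)
    (hQsymm : ∀ t ∈ Set.Icc t₀ T, (Q t).IsSymm)
    (hQ : ∀ t ∈ Set.Icc t₀ T, HasDerivAt Q (-((A t)ᵀ * Q t) - Q t * A t - D t) t)
    (hQfin : Q T = RT) :
    ∀ t ∈ Set.Ioc tc T, (R t - Q t).PosSemidef :=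
  riccati_comparison_linear_general t₀ tc T ht₀ A C D R Q hA hCpos RT hRsymm hR hRfin hQsymm hQ
    hQfin
end
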